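/- arXiv:0803.3557 — 3 statements merged into one kernel-verified Lean document; each statement's English description precedes it below -/
import Mathlib

section
/- Let a, d, b be reals with d > 0, a ≥ 0, b ≥ 0 and b < d·a. Then there exists a continuous nonnegative input u and a time t > 0 with u(t) = 0 such that the output y(t) = d·u(t) + (b − d·a)·∫₀ᵗ e^(−a(t−τ))·u(τ) dτ is strictly negative. -/
theorem stmt6 (a d b : ℝ) (hd : 0 < d) (ha : 0 ≤ a) (hb : 0 ≤ b) (hba : b < d * a) :
    ∃ u : ℝ → ℝ, Continuous u ∧ (∀ t, 0 ≤ u t) ∧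
      ∃ t : ℝ, 0 < t ∧ u t = 0 ∧
        d * u t + (b - d * a) * (∫ τ in (0:ℝ)..t, Real.exp (-a * (t - τ)) * u τ) < 0 := by
  refine ⟨fun τ => max 0 (τ * (1 - τ)), (continuous_const.max (continuous_id.mul (continuous_const.sub continuous_id))), fun t => le_max_left _ _, 1,
    one_pos, by norm_num, ?_⟩
  have hu1 : max (0:ℝ) (1 * (1 - 1)) = 0 := by norm_num
  simp only []
  rw [hu1, mul_zero, zero_add]
  have hcont : Continuous fun τ : ℝ => Real.exp (-a * (1 - τ)) * max 0 (τ * (1 - τ)) :=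
    ((Real.continuous_exp.comp (by continuity)).mul
      (continuous_const.max (continuous_id.mul (continuous_const.sub continuous_id))))
  have hI : 0 < ∫ τ in (0:ℝ)..1, Real.exp (-a * (1 - τ)) * max 0 (τ * (1 - τ)) := by
    apply intervalIntegral.intervalIntegral_pos_of_pos_on
      (hcont.intervalIntegrable 0 1)
    · intro x hx
      have h1 : 0 < x * (1 - x) := mul_pos hx.1 (by linarith [hx.2])
      have : max (0:ℝ) (x * (1 - x)) = x * (1 - x) := max_eq_right h1.le
      rw [this]
      exact mul_pos (Real.exp_pos _) h1
    · norm_num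
  have : b - d * a < 0 := by linarith
  exact mul_neg_of_neg_of_pos this hI
end

section
/- Let d > 0, a, b real with d·a > b ≥ 0 and a ≥ 0. Then the impulse response of F⁻¹(s) = (s+a)/(ds+b), namely g(t) = (1/d)·δ(t) + ((a − b/d)/d)·e^(−(b/d)t), has nonnegative (indeed positive) density part, so every state-space realization of F⁻¹ is externally positive, while no state-space realization of F(s) = (ds+b)/(s+a) is externally positive since its impulse-response density (b − da)·e^(−at) is negative for all t ≥ 0. -/
theorem stmt9_general (a d b : ℝ) (hd : 0 < d) (hba : b < d * a) :
    (∀ t : ℝ, 0 ≤ t → 0 < ((a - b / d) / d) * Real.exp (-(b / d) * t)) ∧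
    (∀ t : ℝ, 0 ≤ t → (b - d * a) * Real.exp (-a * t) < 0) := by
  have hgain : 0 < a - b / d := sub_pos.mpr ((div_lt_iff₀' hd).mpr hba)
  exact ⟨fun t _ => mul_pos (div_pos hgain hd) (Real.exp_pos _),
    fun t _ => mul_neg_of_neg_of_pos (sub_neg.mpr hba) (Real.exp_pos _)⟩

theorem stmt9 (a d b : ℝ) (hd : 0 < d) (ha : 0 ≤ a) (hb : 0 ≤ b) (hba : b < d * a) :
    (∀ t : ℝ, 0 ≤ t → 0 < ((a - b / d) / d) * Real.exp (-(b / d) * t)) ∧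
    (∀ t : ℝ, 0 ≤ t → (b - d * a) * Real.exp (-a * t) < 0) :=
  stmt9_general a d b hd hba
end

section
/- Suppose f₀ : [0,∞) → ℝ is continuous with f₀(t) < 0 for all t ≥ 0, and d > 0. Then the input-output map y(t) = d·u(t) + ∫₀ᵗ f₀(t−τ)·u(τ) dτ is not externally positive: there exists a continuous nonnegative u, not identically zero, and t with u(t)=0 and y(t) < 0. -/
theorem stmt10 (f₀ : ℝ → ℝ) (hf₀ : Continuous f₀) (hneg : ∀ t : ℝ, 0 ≤ t → f₀ t < 0)
    (d : ℝ) (hd : 0 < d) :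
    ∃ u : ℝ → ℝ, Continuous u ∧ (∀ t, 0 ≤ u t) ∧ (∃ t, u t ≠ 0) ∧
      ∃ t : ℝ, 0 < t ∧ u t = 0 ∧
        d * u t + (∫ τ in (0:ℝ)..t, f₀ (t - τ) * u τ) < 0 := by
  refine ⟨fun τ => max 0 (τ * (2 - τ)), continuous_const.max (by continuity), fun t => le_max_left _ _, ⟨1, by norm_num⟩,
    2, by norm_num, by norm_num, ?_⟩
  have hu2 : max (0:ℝ) (2 * (2 - 2)) = 0 := by norm_num
  beta_reduce
  rw [hu2, mul_zero, zero_add]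
  have hcont : Continuous fun τ : ℝ => f₀ (2 - τ) * max 0 (τ * (2 - τ)) := by
    exact (hf₀.comp (by continuity)).mul (continuous_const.max (by continuity))
  have hpos : 0 < ∫ τ in (0:ℝ)..2, -(f₀ (2 - τ) * max 0 (τ * (2 - τ))) := by
    apply intervalIntegral.intervalIntegral_pos_of_pos_on
    · exact (hcont.neg).intervalIntegrable 0 2
    · intro x hx
      obtain ⟨hx0, hx2⟩ := hx
      have h1 : f₀ (2 - x) < 0 := hneg _ (by linarith)
      have h2 : 0 < x * (2 - x) := mul_pos hx0 (by linarith)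
      have : max 0 (x * (2 - x)) = x * (2 - x) := max_eq_right h2.le
      rw [this]
      nlinarith
    · norm_num
  rw [intervalIntegral.integral_neg] at hpos
  linarith
end
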